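/- Let A be a commutative ring with a derivation d : A → A, and on A[T,T⁻¹] let {f,g}_r := T^r·(∂_T f · D g − D f · ∂_T g) and let res f denote the coefficient of T⁻¹ in f. Then for all f,g ∈ A[T,T⁻¹] and all r ∈ ℤ, res(T^{−r}·{f,g}_r) = −d(res(f·∂_T g)). In particular res(T^{−r}·{f,g}_r) is a total derivative, i.e. it lies in the image of d. -/

import Mathlib

open LaurentPolynomial

variable {A : Type*} [CommRing A]

/-- Formal derivative `∂_T` on Laurent polynomials: `∂_T (a·Tⁿ) = n·a·Tⁿ⁻¹`. -/
noncomputable def tder (f : A[T;T⁻¹]) : A[T;T⁻¹] :=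
  Finsupp.sum (AddMonoidAlgebra.coeff f) fun n a => C (n • a) * T (n - 1)

/-- Coefficientwise extension `D` of a derivation `d : A → A`: `D (a·Tⁿ) = d(a)·Tⁿ`. -/
noncomputable def cder (d : A → A) (f : A[T;T⁻¹]) : A[T;T⁻¹] :=
  Finsupp.sum (AddMonoidAlgebra.coeff f) fun n a => C (d a) * T n

/-- The bracket `{f,g}_r := T^r·(∂_T f · D g − D f · ∂_T g)`. -/
noncomputable def lbr (d : A → A) (r : ℤ) (f g : A[T;T⁻¹]) : A[T;T⁻¹] :=
  T r * (tder f * cder d g - cder d f * tder g)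

/-- The residue (coefficient of `T⁻¹`). -/
noncomputable def res (f : A[T;T⁻¹]) : A := AddMonoidAlgebra.coeff f (-1)

lemma tder_single (n : ℤ) (a : A) : tder (C a * T n) = C (n • a) * T (n - 1) := by
  rw [← single_eq_C_mul_T, tder, AddMonoidAlgebra.coeff_single, Finsupp.sum_single_index]
  simp

lemma cder_single (d : A → A) (hd0 : d 0 = 0) (n : ℤ) (a : A) :
    cder d (C a * T n) = C (d a) * T n := by
  rw [← single_eq_C_mul_T, cder, AddMonoidAlgebra.coeff_single, Finsupp.sum_single_index]
  simp [hd0]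

lemma tder_add (f g : A[T;T⁻¹]) : tder (f + g) = tder f + tder g := by
  unfold tder
  rw [AddMonoidAlgebra.coeff_add, Finsupp.sum_add_index]
  · simp
  · intro n _ b c
    rw [smul_add, map_add, add_mul]

lemma cder_add (d : A → A) (hd : ∀ a b : A, d (a+b) = d a + d b) (f g : A[T;T⁻¹]) :
    cder d (f + g) = cder d f + cder d g := by
  have hd0 : d 0 = 0 := by have := hd 0 0; simpa using this.symm
  unfold cder
  rw [AddMonoidAlgebra.coeff_add, Finsupp.sum_add_index]
  · simp [hd0]
  · intro n _ b c
    rw [hd, map_add, add_mul]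

lemma res_add (f g : A[T;T⁻¹]) : res (f + g) = res f + res g := by
  unfold res
  rw [AddMonoidAlgebra.coeff_add]
  rfl

lemma res_single (k : ℤ) (c : A) : res (C c * T k) = if k = -1 then c else 0 := by
  rw [← single_eq_C_mul_T]
  unfold res
  rw [AddMonoidAlgebra.coeff_single, Finsupp.single_apply]

lemma mono_mul (a b : A) (n m : ℤ) :
    (C a * T n) * (C b * T m) = C (a * b) * T (n + m) := by
  rw [T_add, map_mul]; ring

lemma key (d : A → A)
    (hd_add : ∀ a b : A, d (a + b) = d a + d b)
    (hd_mul : ∀ a b : A, d (a * b) = a * d b + d a * b)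
    (f g : A[T;T⁻¹]) :
    res (tder f * cder d g - cder d f * tder g) = - d (res (f * tder g)) := by
  have hd0 : d 0 = 0 := by have := hd_add 0 0; simpa using this.symm
  have hzsmul : ∀ (n : ℤ) (x : A), d (n • x) = n • d x := fun n x =>
    map_zsmul (AddMonoidHom.mk' d hd_add) n x
  induction f using LaurentPolynomial.induction_on' with
  | add p q hp hq =>
    rw [tder_add, cder_add d hd_add, add_mul, add_mul, add_sub_add_comm, res_add,
      add_mul, res_add, hd_add, hp, hq, neg_add]
  | C_mul_T n a =>
    induction g using LaurentPolynomial.induction_on' with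
    | add p q hp hq =>
      rw [tder_add, cder_add d hd_add, mul_add, mul_add, add_sub_add_comm, res_add,
        mul_add, res_add, hd_add, hp, hq, neg_add]
    | C_mul_T m b =>
      rw [tder_single, cder_single d hd0, tder_single, cder_single d hd0,
        mono_mul, mono_mul, mono_mul]
      have e1 : n - 1 + m = n + m - 1 := by ring
      have e2 : n + (m - 1) = n + m - 1 := by ring
      rw [e1, e2, ← sub_mul, ← map_sub, res_single, res_single]
      by_cases h : n + m - 1 = -1
      · have hm : m = -n := by omega
        rw [if_pos h, if_pos h, hm]
        rw [mul_smul_comm, mul_smul_comm, hzsmul, hd_mul]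
        simp only [smul_mul_assoc, mul_smul_comm, smul_sub, smul_add, zsmul_eq_mul]
        push_cast
        ring
      · rw [if_neg h, if_neg h, hd0, neg_zero]

/-- `res(T^{−r}·{f,g}_r) = −d(res(f·∂_T g))`; in particular `res(T^{−r}·{f,g}_r)` is a
total derivative, i.e. lies in the image of `d`. -/
theorem res_bracket_total_derivative (d : A → A)
    (hd_add : ∀ a b : A, d (a + b) = d a + d b)
    (hd_mul : ∀ a b : A, d (a * b) = a * d b + d a * b)
    (r : ℤ) (f g : A[T;T⁻¹]) :
    res (T (-r) * lbr d r f g) = - d (res (f * tder g)) ∧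
    res (T (-r) * lbr d r f g) ∈ Set.range d := by
  have h : res (T (-r) * lbr d r f g) = - d (res (f * tder g)) := by
    unfold lbr
    rw [← mul_assoc, ← T_add, neg_add_cancel, T_zero, one_mul]
    exact key d hd_add hd_mul f g
  refine ⟨h, -(res (f * tder g)), ?_⟩
  rw [h]
  exact map_neg (AddMonoidHom.mk' d hd_add) _
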